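/- arXiv:1605.02048 — 5 statements merged into one kernel-verified Lean document; each statement's English description precedes it below -/
import Mathlib

section
/- Let f = Σ a_n T^n and g = Σ b_n T^n be convergent power series with real coefficients, and let f · g denote their Cauchy product, (f·g)_n = Σ_{k=0}^n a_k b_{n−k}. Then for every continuous function w : ℝ → ℝ and every real x, ((f·g) • w)(x) = (f • (g • w))(x); that is, the action of convergent power series on continuous functions via iterated integration is multiplicative, making C(ℝ) a module over the ring of convergent power series. -/
/-- The normalized indefinite integral: `(V w) x = ∫_0^x w(t) dt`. -/
noncomputable def V (w : ℝ → ℝ) : ℝ → ℝ := fun x => ∫ t in (0:ℝ)..x, w t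

/-!
If `|w| ≤ M` on `[0, y]`, then `|Vⁿ w t| ≤ M |t|ⁿ / n!` there, so the series `∑ bₘ Vᵐ w`
converges uniformly on compacts and can be integrated termwise:
`Vⁿ (∑ bₘ Vᵐ w) = ∑ bₘ Vⁿ⁺ᵐ w`. Both sides of the identity are then two ways of summing the
double series `∑ₖ,ₘ aₖ bₘ (Vᵏ⁺ᵐ w)(x)`, which converges absolutely since `n! m! ≤ (n + m)!`
and `a`, `b` have positive radius of convergence.
-/

open Set Finset intervalIntegral
open scoped Nat

theorem Summable.tsum_sum_antidiagonal {α : Type*} [AddCommGroup α] [UniformSpace α]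
    [IsUniformAddGroup α] [CompleteSpace α] [T0Space α] {F : ℕ × ℕ → α} (hF : Summable F) :
    ∑' n, ∑ kl ∈ antidiagonal n, F kl = ∑' p, F p := by
  let e := HasAntidiagonal.sigmaAntidiagonalEquivProd (A := ℕ)
  calc ∑' n, ∑ kl ∈ antidiagonal n, F kl = ∑' n, ∑' kl : antidiagonal n, F kl :=
        tsum_congr fun n => (Finset.tsum_subtype _ F).symm
    _ = ∑' c, F (e c) := (e.summable_iff.2 hF).tsum_sigma.symm
    _ = ∑' p, F p := e.tsum_eq F

theorem abs_integral_abs_pow (n : ℕ) (y : ℝ) :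
    |∫ t in (0:ℝ)..y, |t| ^ n| = |y| ^ (n + 1) / (n + 1) := by
  wlog hy : 0 ≤ y generalizing y
  · have := this (-y) (by linarith)
    rw [← neg_zero, ← integral_comp_neg, integral_symm, abs_neg, abs_neg] at this
    simpa only [abs_neg] using this
  have : ∫ t in (0:ℝ)..y, |t| ^ n = ∫ t in (0:ℝ)..y, t ^ n := integral_congr fun t ht => by
    rw [uIcc_of_le hy] at ht
    simp only [abs_of_nonneg ht.1]
  rw [this, integral_pow]
  simp [abs_div, abs_of_nonneg hy, abs_of_nonneg (by positivity : (0:ℝ) ≤ n + 1)]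

theorem pow_div_factorial_add_le {s : ℝ} (hs : 0 ≤ s) (n m : ℕ) :
    s ^ (n + m) / (n + m)! ≤ s ^ n / n ! * (s ^ m / m !) := by
  rw [div_mul_div_comm, ← pow_add]
  gcongr
  exact_mod_cast Nat.le_of_dvd (n + m).factorial_pos
    (Nat.factorial_mul_factorial_dvd_factorial_add n m)

theorem continuous_V {w : ℝ → ℝ} (hw : Continuous w) : Continuous (V w) :=
  continuous_primitive (fun a b => hw.intervalIntegrable a b) 0

theorem continuous_iterate_V {w : ℝ → ℝ} (hw : Continuous w) (n : ℕ) : Continuous (V^[n] w) := by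
  induction n with
  | zero => exact hw
  | succ n ih => rw [Function.iterate_succ_apply']; exact continuous_V ih

section bounds

variable {w : ℝ → ℝ} {y M : ℝ} (hM : ∀ t ∈ uIcc 0 y, |w t| ≤ M)
include hM

theorem abs_iterate_V_le (n : ℕ) {t : ℝ} (ht : t ∈ uIcc 0 y) :
    |V^[n] w t| ≤ M * (|t| ^ n / n !) := by
  induction n generalizing t with
  | zero => simpa using hM t ht
  | succ n ih =>
    have hM0 : 0 ≤ M := (abs_nonneg _).trans (hM 0 left_mem_uIcc)
    have hsub : uIoc 0 t ⊆ uIcc 0 y := uIoc_subset_uIcc.trans (uIcc_subset_uIcc_left ht)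
    calc |V^[n + 1] w t| = ‖∫ s in (0:ℝ)..t, V^[n] w s‖ := by
          rw [Function.iterate_succ_apply', Real.norm_eq_abs]; rfl
      _ ≤ |∫ s in (0:ℝ)..t, M * (|s| ^ n / n !)| := by
          refine norm_integral_le_abs_of_norm_le ?_
            (Continuous.intervalIntegrable (by fun_prop) _ _)
          filter_upwards [MeasureTheory.ae_restrict_mem measurableSet_uIoc] with s hs
          exact ih (hsub hs)
      _ = M * (|t| ^ (n + 1) / (n + 1)!) := by
          have : ∫ s in (0:ℝ)..t, M * (|s| ^ n / n !) = M / n ! * ∫ s in (0:ℝ)..t, |s| ^ n := by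
            rw [← integral_const_mul]
            exact integral_congr fun s _ => by ring
          rw [this, abs_mul, abs_integral_abs_pow, abs_of_nonneg (by positivity), Nat.factorial_succ]
          push_cast
          field_simp

theorem abs_iterate_V_add_le (n m : ℕ) {t : ℝ} (ht : t ∈ uIcc 0 y) :
    |V^[n + m] w t| ≤ M * (|y| ^ n / n !) * (|y| ^ m / m !) := by
  have hM0 : 0 ≤ M := (abs_nonneg _).trans (hM 0 left_mem_uIcc)
  have hty : |t| ≤ |y| := by simpa using abs_sub_left_of_mem_uIcc ht
  calc |V^[n + m] w t| ≤ M * (|t| ^ (n + m) / (n + m)!) := abs_iterate_V_le hM _ ht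
    _ ≤ M * (|y| ^ (n + m) / (n + m)!) := by gcongr
    _ ≤ M * (|y| ^ n / n ! * (|y| ^ m / m !)) := by
        gcongr; exact pow_div_factorial_add_le (abs_nonneg y) n m
    _ = M * (|y| ^ n / n !) * (|y| ^ m / m !) := by ring

end bounds

theorem exists_abs_le_on_uIcc {w : ℝ → ℝ} (hw : Continuous w) (y : ℝ) :
    ∃ M, ∀ t ∈ uIcc 0 y, |w t| ≤ M :=
  isCompact_uIcc.exists_bound_of_continuousOn hw.continuousOn

theorem summable_abs_mul_pow_div_factorial {b : ℕ → ℝ} {r : ℝ} (hr : 0 < r)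
    (hb : Summable fun n => |b n| * r ^ n) {R : ℝ} (hR : 0 ≤ R) :
    Summable fun n => |b n| * (R ^ n / n !) := by
  set C := ∑' n, |b n| * r ^ n
  refine .of_nonneg_of_le (fun n => by positivity) (fun n => ?_)
    ((Real.summable_pow_div_factorial (R / r)).mul_left C)
  have hbC : |b n| * r ^ n ≤ C := hb.le_tsum n fun k _ => by positivity
  calc |b n| * (R ^ n / n !) = |b n| * r ^ n * ((R / r) ^ n / n !) := by
        rw [div_pow]; field_simp
    _ ≤ C * ((R / r) ^ n / n !) := by gcongr

theorem V_tsum {f : ℕ → ℝ → ℝ} (hf : ∀ m, Continuous (f m)) {u : ℕ → ℝ} (hu : Summable u)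
    {y : ℝ} (hfu : ∀ m, ∀ t ∈ uIcc 0 y, |f m t| ≤ u m) :
    V (fun t => ∑' m, f m t) y = ∑' m, V (f m) y := by
  let F : ℕ → C(ℝ, ℝ) := fun m => ⟨f m, hf m⟩
  have hu0 (m : ℕ) : 0 ≤ u m := (abs_nonneg _).trans (hfu m 0 left_mem_uIcc)
  have hF : Summable fun m =>
      ‖(F m).restrict (⟨uIcc 0 y, isCompact_uIcc⟩ : TopologicalSpace.Compacts ℝ)‖ :=
    .of_nonneg_of_le (fun m => norm_nonneg _)
      (fun m => (ContinuousMap.norm_le _ (hu0 m)).2 fun t => hfu m t t.2) hu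
  exact (tsum_intervalIntegral_eq_of_summable_norm hF).symm

section series

variable {b : ℕ → ℝ} {r : ℝ} (hr : 0 < r) (hb : Summable fun n => |b n| * r ^ n)
  {w : ℝ → ℝ} (hw : Continuous w)
include hr hb hw

theorem iterate_V_tsum (n : ℕ) (y : ℝ) :
    V^[n] (fun t => ∑' m, b m * V^[m] w t) y = ∑' m, b m * V^[n + m] w y := by
  induction n generalizing y with
  | zero => simp
  | succ n ih =>
    obtain ⟨M, hM⟩ := exists_abs_le_on_uIcc hw y
    have hbound (m : ℕ) (t : ℝ) (ht : t ∈ uIcc 0 y) :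
        |b m * V^[n + m] w t| ≤ M * (|y| ^ n / n !) * (|b m| * (|y| ^ m / m !)) := by
      rw [abs_mul]
      calc |b m| * |V^[n + m] w t| ≤ |b m| * (M * (|y| ^ n / n !) * (|y| ^ m / m !)) := by
            gcongr; exact abs_iterate_V_add_le hM n m ht
        _ = M * (|y| ^ n / n !) * (|b m| * (|y| ^ m / m !)) := by ring
    rw [Function.iterate_succ_apply', funext ih,
      V_tsum (f := fun m t => b m * V^[n + m] w t)
        (fun m => continuous_const.mul (continuous_iterate_V hw _))
        ((summable_abs_mul_pow_div_factorial hr hb (abs_nonneg y)).mul_left _) hbound]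
    refine tsum_congr fun m => ?_
    rw [show n + 1 + m = n + m + 1 by omega, Function.iterate_succ_apply']
    exact integral_const_mul _ _

theorem summable_mul_mul_iterate_V {a : ℕ → ℝ} {ra : ℝ} (hra : 0 < ra)
    (ha : Summable fun n => |a n| * ra ^ n) (x : ℝ) :
    Summable fun p : ℕ × ℕ => a p.1 * (b p.2 * V^[p.1 + p.2] w x) := by
  obtain ⟨M, hM⟩ := exists_abs_le_on_uIcc hw x
  have hM0 : 0 ≤ M := (abs_nonneg _).trans (hM 0 left_mem_uIcc)
  refine .of_norm_bounded
    (g := fun p => M * (|a p.1| * (|x| ^ p.1 / p.1 !)) * (|b p.2| * (|x| ^ p.2 / p.2 !))) ?_ ?_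
  · exact .mul_of_nonneg ((summable_abs_mul_pow_div_factorial hra ha (abs_nonneg x)).mul_left M)
      (summable_abs_mul_pow_div_factorial hr hb (abs_nonneg x))
      (fun k => by positivity) (fun m => by positivity)
  · rintro ⟨k, m⟩
    calc ‖a k * (b m * V^[k + m] w x)‖ = |a k| * |b m| * |V^[k + m] w x| := by
          rw [Real.norm_eq_abs, abs_mul, abs_mul, mul_assoc]
      _ ≤ |a k| * |b m| * (M * (|x| ^ k / k !) * (|x| ^ m / m !)) := by
          gcongr; exact abs_iterate_V_add_le hM k m right_mem_uIcc
      _ = M * (|a k| * (|x| ^ k / k !)) * (|b m| * (|x| ^ m / m !)) := by ring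

end series

/-- The action of convergent power series on continuous functions via iterated
integration is multiplicative: `(f·g) • w = f • (g • w)`, where `f·g` is the
Cauchy product. -/
theorem action_mul (a b : ℕ → ℝ)
    (ha : ∃ r : ℝ, 0 < r ∧ Summable (fun n => |a n| * r ^ n))
    (hb : ∃ r : ℝ, 0 < r ∧ Summable (fun n => |b n| * r ^ n))
    (w : ℝ → ℝ) (hw : Continuous w) (x : ℝ) :
    ∑' n, (∑ k ∈ Finset.range (n + 1), a k * b (n - k)) * (V^[n] w) x =
      ∑' n, a n * (V^[n] (fun y => ∑' m, b m * (V^[m] w) y)) x := by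
  obtain ⟨ra, hra, ha⟩ := ha
  obtain ⟨rb, hrb, hb⟩ := hb
  set F : ℕ × ℕ → ℝ := fun p => a p.1 * (b p.2 * V^[p.1 + p.2] w x)
  have hF : Summable F := summable_mul_mul_iterate_V hrb hb hw hra ha x
  calc ∑' n, (∑ k ∈ range (n + 1), a k * b (n - k)) * V^[n] w x
      = ∑' n, ∑ kl ∈ antidiagonal n, F kl := tsum_congr fun n => by
        rw [Nat.sum_antidiagonal_eq_sum_range_succ_mk, sum_mul]
        refine sum_congr rfl fun k hk => ?_
        dsimp only [F]
        rw [Nat.add_sub_cancel' (Nat.lt_succ_iff.1 (mem_range.1 hk))]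
        ring
    _ = ∑' p, F p := hF.tsum_sum_antidiagonal
    _ = ∑' k, ∑' m, F (k, m) := hF.tsum_prod
    _ = ∑' n, a n * V^[n] (fun y => ∑' m, b m * V^[m] w y) x := tsum_congr fun k => by
        dsimp only [F]
        rw [iterate_V_tsum hrb hb hw, tsum_mul_left]
end

section
/- Let n ≥ 1, let a_0, a_1, …, a_n be real numbers with a_0 ≠ 0, let p = Σ_{k=0}^{n−1} p_k T^k be a real polynomial of degree at most n−1, and let q = Σ_k q_k T^k be a convergent power series such that the formal product (a_0 + a_1 T + ⋯ + a_n T^n)·q equals p. Then the function w(x) = Σ_k q_k x^k / k! is infinitely differentiable on ℝ and satisfies the linear constant-coefficient differential equation a_0 w^{(n)}(x) + a_1 w^{(n−1)}(x) + ⋯ + a_n w(x) = 0 for all real x. -/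
open Finset

lemma aux_summable (q : ℕ → ℝ) (r C : ℝ) (hr : 0 < r) (hC : ∀ k, |q k| * r ^ k ≤ C)
    (j : ℕ) (x : ℝ) : Summable (fun k => q (k + j) * x ^ k / (Nat.factorial k)) := by
  apply Summable.of_norm
  have hS : Summable (fun k => (C / r ^ j) * ((|x| / r) ^ k / (Nat.factorial k))) :=
    (Real.summable_pow_div_factorial (|x| / r)).mul_left _
  apply hS.of_nonneg_of_le (fun k => norm_nonneg _)
  intro k
  have h1 : |q (k + j)| ≤ C / r ^ (k + j) :=
    (le_div_iff₀ (pow_pos hr _)).2 (hC _)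
  have h2 : C / r ^ j * ((|x| / r) ^ k / (Nat.factorial k))
      = (C / r ^ (k + j)) * |x| ^ k / (Nat.factorial k) := by
    rw [div_pow, pow_add]
    ring
  rw [h2]
  rw [norm_div, norm_mul, norm_pow, Real.norm_natCast]
  gcongr
  exact (abs_nonneg _).trans h1
  exacts [h1, (Real.norm_eq_abs x).le]

lemma aux_hasDerivAt (q : ℕ → ℝ) (r C : ℝ) (hr : 0 < r) (hC : ∀ k, |q k| * r ^ k ≤ C)
    (j : ℕ) (x : ℝ) :
    HasDerivAt (fun y : ℝ => ∑' k, q (k + j) * y ^ k / (Nat.factorial k))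
      (∑' k, q (k + (j + 1)) * x ^ k / (Nat.factorial k)) x := by
  have hC0 : 0 ≤ C := le_trans (by positivity) (hC 0)
  set R : ℝ := |x| + 1 with hR
  have hR1 : (1:ℝ) ≤ R := le_add_of_nonneg_left (abs_nonneg x)
  have hR0 : (0:ℝ) < R := lt_of_lt_of_le one_pos hR1
  set g' : ℕ → ℝ → ℝ := fun k y => q (k + j) * ((k : ℝ) * y ^ (k - 1)) / (Nat.factorial k)
    with hg'def
  set u : ℕ → ℝ := fun k => (C / r ^ j) * ((k : ℝ) * (R / r) ^ k / (Nat.factorial k)) with hu'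
  have hu : Summable u := by
    apply Summable.mul_left
    apply (summable_nat_add_iff 1).1
    have h := (Real.summable_pow_div_factorial (R / r)).mul_left (R / r)
    apply h.congr
    intro k
    rw [Nat.factorial_succ]
    push_cast
    have hk : (0:ℝ) < (k : ℝ) + 1 := by positivity
    field_simp
    rw [pow_succ, mul_comm r, mul_assoc, div_mul_cancel₀ R hr.ne']
    ring
  have hball : ∀ y : ℝ, y ∈ Metric.ball (0:ℝ) (R + 1) → |y| ≤ R + 1 := by
    intro y hy
    rw [Metric.mem_ball, dist_zero_right, Real.norm_eq_abs] at hy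
    linarith
  have hg : ∀ k, ∀ y : ℝ, y ∈ Metric.ball (0:ℝ) R →
      HasDerivAt (fun z : ℝ => q (k + j) * z ^ k / (Nat.factorial k)) (g' k y) y := by
    intro k y _
    exact ((hasDerivAt_pow k y).const_mul _).div_const _
  have hgb : ∀ k, ∀ y : ℝ, y ∈ Metric.ball (0:ℝ) R → ‖g' k y‖ ≤ u k := by
    intro k y hy
    rw [Metric.mem_ball, dist_zero_right, Real.norm_eq_abs] at hy
    have hyR : |y| ≤ R := le_of_lt hy
    have h1 : |q (k + j)| ≤ C / r ^ (k + j) := (le_div_iff₀ (pow_pos hr _)).2 (hC _)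
    have h2 : |y| ^ (k - 1) ≤ R ^ k := by
      calc |y| ^ (k - 1) ≤ R ^ (k - 1) := pow_le_pow_left₀ (abs_nonneg y) hyR _
        _ ≤ R ^ k := pow_le_pow_right₀ hR1 (Nat.sub_le k 1)
    have h3 : u k = (C / r ^ (k + j)) * ((k : ℝ) * R ^ k) / (Nat.factorial k) := by
      simp only [hu']
      rw [div_pow, pow_add]
      ring
    rw [h3, hg'def]
    simp only [Real.norm_eq_abs, abs_div, abs_mul, abs_pow, Nat.abs_cast]
    gcongr
  have hx : x ∈ Metric.ball (0:ℝ) R := by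
    rw [Metric.mem_ball, dist_zero_right, Real.norm_eq_abs, hR]
    linarith
  have h0 : (0:ℝ) ∈ Metric.ball (0:ℝ) R := by
    rw [Metric.mem_ball, dist_self]; exact hR0
  have key := hasDerivAt_tsum_of_isPreconnected hu Metric.isOpen_ball
    (convex_ball (0:ℝ) R).isPreconnected hg hgb h0
    (aux_summable q r C hr hC j 0) hx
  have hsum' : Summable (fun k => g' k x) :=
    hu.of_norm_bounded (fun k => hgb k x hx)
  have e1 : ∑' k, g' k x = ∑' k, q (k + (j + 1)) * x ^ k / (Nat.factorial k) := by
    rw [Summable.tsum_eq_zero_add hsum']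
    have hz : g' 0 x = 0 := by simp [hg'def]
    rw [hz, zero_add]
    refine tsum_congr fun k => ?_
    show q (k + 1 + j) * (((k + 1 : ℕ) : ℝ) * x ^ (k + 1 - 1)) / (Nat.factorial (k + 1))
      = q (k + (j + 1)) * x ^ k / (Nat.factorial k)
    have hi : k + 1 + j = k + (j + 1) := by omega
    rw [hi, Nat.factorial_succ, Nat.add_sub_cancel]
    push_cast
    have hk : (0:ℝ) < (k : ℝ) + 1 := by positivity
    have hf : (0:ℝ) < (Nat.factorial k : ℝ) := by positivity
    field_simp
  rw [← e1]
  exact key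

/-- Example 1: if `(a_0 + a_1 T + ⋯ + a_n T^n) · q = p` formally, with `a_0 ≠ 0`,
`p` a polynomial of degree `≤ n-1` and `q` a convergent power series, then
`w(x) = Σ q_k x^k / k!` is smooth and satisfies
`a_0 w^{(n)} + a_1 w^{(n-1)} + ⋯ + a_n w = 0`. -/
theorem const_coeff_ODE_solution (n : ℕ) (hn : 1 ≤ n) (a : ℕ → ℝ) (ha0 : a 0 ≠ 0)
    (p : ℕ → ℝ) (hp : ∀ k, n ≤ k → p k = 0)
    (q : ℕ → ℝ) (hq : ∃ r : ℝ, 0 < r ∧ Summable (fun k => |q k| * r ^ k))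
    (hmul : ∀ m : ℕ, ∑ k ∈ Finset.range (m + 1),
        (if k ≤ n then a k else 0) * q (m - k) = p m) :
    ContDiff ℝ (⊤ : ℕ∞) (fun x : ℝ => ∑' k, q k * x ^ k / (Nat.factorial k)) ∧
    ∀ x : ℝ, ∑ i ∈ Finset.range (n + 1),
        a i * iteratedDeriv (n - i) (fun y : ℝ => ∑' k, q k * y ^ k / (Nat.factorial k)) x = 0 := by
  obtain ⟨r, hr, hsum⟩ := hq
  set C := ∑' k, |q k| * r ^ k with hCdef
  have hC : ∀ k, |q k| * r ^ k ≤ C :=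
    fun k => Summable.le_tsum hsum k (fun i _ => mul_nonneg (abs_nonneg _) (pow_nonneg hr.le _))
  set w : ℝ → ℝ := fun x => ∑' k, q k * x ^ k / (Nat.factorial k) with hw
  have hiter : ∀ j, iteratedDeriv j w
      = fun x => ∑' k, q (k + j) * x ^ k / (Nat.factorial k) := by
    intro j
    induction j with
    | zero => funext x; simp [iteratedDeriv_zero, hw]
    | succ j ih =>
      rw [iteratedDeriv_succ, ih]
      funext x
      exact (aux_hasDerivAt q r C hr hC j x).deriv
  constructor
  · set F := FormalMultilinearSeries.ofScalars ℝ (fun k => q k / (Nat.factorial k)) with hF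
    have hFrad : F.radius = ⊤ := by
      apply FormalMultilinearSeries.radius_eq_top_of_summable_norm
      intro r'
      simp only [hF, FormalMultilinearSeries.ofScalars_norm]
      have hS : Summable (fun k => C / r ^ 0 * (((r' : ℝ) / r) ^ k / (Nat.factorial k))) :=
        (Real.summable_pow_div_factorial ((r' : ℝ) / r)).mul_left _
      apply hS.of_nonneg_of_le (fun k => by positivity)
      intro k
      have h1 : |q k| ≤ C / r ^ k := (le_div_iff₀ (pow_pos hr _)).2 (hC _)
      have h2 : C / r ^ 0 * (((r' : ℝ) / r) ^ k / (Nat.factorial k))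
          = (C / r ^ k) * (r' : ℝ) ^ k / (Nat.factorial k) := by
        rw [div_pow]
        ring
      rw [h2, norm_div, Real.norm_eq_abs, Real.norm_natCast]
      rw [div_mul_eq_mul_div]
      gcongr
    have hw_eq : w = F.sum := by
      funext x
      rw [hw, FormalMultilinearSeries.sum]
      refine tsum_congr fun k => ?_
      rw [hF, FormalMultilinearSeries.ofScalars_apply_eq]
      rw [smul_eq_mul]
      ring
    have hanalytic : AnalyticOnNhd ℝ F.sum Set.univ := by
      intro y _
      exact (F.hasFPowerSeriesOnBall (by rw [hFrad]; exact ENNReal.zero_lt_top)).analyticAt_of_mem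
        (by rw [hFrad]; simp [EMetric.mem_ball, edist_lt_top])
    rw [hw_eq]
    exact hanalytic.contDiff
  · intro x
    have hterm : ∀ i ∈ Finset.range (n + 1),
        a i * iteratedDeriv (n - i) w x
          = ∑' k, a i * (q (k + n - i) * x ^ k / (Nat.factorial k)) := by
      intro i hi
      rw [hiter (n - i), ← tsum_mul_left]
      refine tsum_congr fun k => ?_
      have hin : i ≤ n := by
        rw [Finset.mem_range] at hi; omega
      have : k + (n - i) = k + n - i := by omega
      rw [this]
    have hsummable : ∀ i ∈ Finset.range (n + 1),
        Summable (fun k => a i * (q (k + n - i) * x ^ k / (Nat.factorial k))) := by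
      intro i hi
      have hin : i ≤ n := by rw [Finset.mem_range] at hi; omega
      apply Summable.mul_left
      apply (aux_summable q r C hr hC (n - i) x).congr
      intro k
      have : k + (n - i) = k + n - i := by omega
      rw [this]
    rw [Finset.sum_congr rfl hterm, ← Summable.tsum_finsetSum hsummable]
    have hz : ∀ k, ∑ i ∈ Finset.range (n + 1),
        a i * (q (k + n - i) * x ^ k / (Nat.factorial k)) = 0 := by
      intro k
      have hm := hmul (k + n)
      rw [hp (k + n) (by omega)] at hm
      have hsub : Finset.range (n + 1) ⊆ Finset.range (k + n + 1) :=
        Finset.range_subset_range.2 (by omega)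
      have e : ∑ i ∈ Finset.range (n + 1), a i * q (k + n - i) = 0 := by
        rw [← hm]
        rw [← Finset.sum_subset hsub (fun i hi hni => by
          have h1 : ¬ i ≤ n := by
            rw [Finset.mem_range] at hni; omega
          simp [h1])]
        refine Finset.sum_congr rfl fun i hi => ?_
        rw [Finset.mem_range] at hi
        rw [if_pos (by omega)]
      calc ∑ i ∈ Finset.range (n + 1), a i * (q (k + n - i) * x ^ k / (Nat.factorial k))
          = (∑ i ∈ Finset.range (n + 1), a i * q (k + n - i)) * (x ^ k / (Nat.factorial k)) := by
            rw [Finset.sum_mul]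
            refine Finset.sum_congr rfl fun i _ => by ring
        _ = 0 := by rw [e, zero_mul]
    calc ∑' k, ∑ i ∈ Finset.range (n + 1),
          a i * (q (k + n - i) * x ^ k / (Nat.factorial k))
        = ∑' (_ : ℕ), (0:ℝ) := tsum_congr hz
      _ = 0 := tsum_zero
end

section
/- For every natural number n and every real number x, the Laguerre polynomial given by the Rodrigues formula satisfies (e^x / n!) · d^n/dx^n (x^n e^{−x}) = Σ_{k=0}^{n} binom(n,k) · (−1)^k / k! · x^k, where d^n/dx^n denotes the n-th iterated derivative of the function t ↦ t^n e^{−t} evaluated at x. -/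
/-! Leibniz's rule expands `(d/dx)^n (x^n e^{-x})` as `e^{-x} Σ_i C(n,i) n^{(i)} (-1)^{n-i} x^{n-i}`
with `n^{(i)}` the falling factorial; reindexing by `k = n - i` and using `k! · n^{(n-k)} = n!`
gives the coefficients `C(n,k) (-1)^k / k!`. -/

open Finset Real Nat

theorem iteratedDeriv_pow_mul_exp_const_mul (m n : ℕ) (c x : ℝ) :
    iteratedDeriv n (fun t => t ^ m * exp (c * t)) x =
      ∑ i ∈ range (n + 1),
        (n.choose i : ℝ) * (m.descFactorial i * x ^ (m - i)) * (c ^ (n - i) * exp (c * x)) := by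
  rw [iteratedDeriv_fun_mul (by fun_prop) (by fun_prop)]
  simp only [iteratedDeriv_pow, iteratedDeriv_exp_const_mul]

/-- The Rodrigues formula for the Laguerre polynomial:
`(e^x / n!) (d/dx)^n (x^n e^{-x}) = Σ_{k=0}^n C(n,k) (-1)^k x^k / k!`. -/
theorem laguerre_rodrigues (n : ℕ) (x : ℝ) :
    Real.exp x / (Nat.factorial n) *
      iteratedDeriv n (fun t : ℝ => t ^ n * Real.exp (-t)) x =
    ∑ k ∈ Finset.range (n + 1),
      (n.choose k : ℝ) * (-1) ^ k / (Nat.factorial k) * x ^ k := by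
  have hleibniz := iteratedDeriv_pow_mul_exp_const_mul n n (-1) x
  simp only [neg_one_mul] at hleibniz
  rw [hleibniz, mul_sum, ← sum_range_reflect]
  refine sum_congr rfl fun k hk_mem => ?_
  have hk : k ≤ n := Nat.lt_succ_iff.mp (mem_range.mp hk_mem)
  have hfac : (k ! : ℝ) * n.descFactorial (n - k) = n ! := by
    exact_mod_cast Nat.sub_sub_self hk ▸ Nat.factorial_mul_descFactorial (Nat.sub_le n k)
  rw [add_tsub_cancel_right, Nat.choose_symm hk, Nat.sub_sub_self hk, ← hfac]
  have hexp : exp x * exp (-x) = 1 := by rw [← exp_add, add_neg_cancel, exp_zero]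
  field_simp
  linear_combination (n.choose k : ℝ) * x ^ k * hexp
end

section
/- For every real number x with 0 < |x| < 1, one has (√(1+x²) − 1) / (x √(1+x²)) = Σ_{k≥1} ((−1)^{k+1} (2k−1)! / (2^{2k−1} (k−1)! k!)) x^{2k−1}, the series converging absolutely. -/
/-! The left side is `(1 - (1 + x²)^(-1/2)) / x`. The binomial series of `(1 + t)^(-1/2)` has
radius `1` and coefficients `binom(-1/2, k + 1) = (-1)^(k+1) (2k+1)! / (2^(2k+1) k! (k+1)!)` for
`k ≥ 0`, so at `t = x²` dropping its constant term and dividing by `-x` gives the series, which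
converges absolutely together with the binomial series. -/

open Polynomial in
theorem Ring.choose_succ_eq_mul_sub_div {K : Type*} [Field K] [CharZero K] (a : K) (n : ℕ) :
    Ring.choose a (n + 1) = Ring.choose a n * (a - n) / (n + 1) := by
  rw [Ring.choose_eq_smul, Ring.choose_eq_smul, descPochhammer_succ_right, smeval_mul,
    smeval_sub, smeval_X, smeval_natCast, Nat.factorial_succ]
  simp only [smul_eq_mul, nsmul_eq_mul, pow_one, pow_zero, Nat.cast_mul, Nat.cast_succ, mul_one]
  field_simp

theorem Ring.choose_neg_half_succ (k : ℕ) :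
    Ring.choose (-(1 / 2) : ℝ) (k + 1) =
      (-1) ^ (k + 1) * (2 * k + 1).factorial /
        (2 ^ (2 * k + 1) * k.factorial * (k + 1).factorial) := by
  induction k with
  | zero => norm_num [Ring.choose_one_right]
  | succ k ih =>
    rw [Ring.choose_succ_eq_mul_sub_div, ih, show 2 * (k + 1) + 1 = 2 * k + 1 + 1 + 1 by ring]
    simp only [Nat.factorial_succ]
    push_cast
    field_simp
    ring

theorem Real.hasSum_choose_mul_pow (a : ℝ) {t : ℝ} (ht : |t| < 1) :
    HasSum (fun n ↦ Ring.choose a n * t ^ n) ((1 + t) ^ a) := by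
  have h := Real.one_add_rpow_hasFPowerSeriesOnBall_zero (a := a) |>.hasSum (y := t)
    (by simpa [edist_dist, Real.dist_eq] using ht)
  simpa only [binomialSeries, FormalMultilinearSeries.ofScalars_apply_eq, smul_eq_mul, zero_add]
    using h

theorem Real.summable_abs_choose_mul_pow (a : ℝ) {t : ℝ} (ht : |t| < 1) :
    Summable (fun n ↦ |Ring.choose a n * t ^ n|) := by
  have ht' : t ∈ Metric.eball (0 : ℝ) 1 := by simpa [edist_dist, Real.dist_eq] using ht
  have h := (binomialSeries ℝ a).summable_norm_apply
    (Metric.eball_subset_eball binomialSeries_radius_ge_one ht')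
  simpa only [binomialSeries, FormalMultilinearSeries.ofScalars_apply_eq, smul_eq_mul,
    Real.norm_eq_abs] using h

theorem sqrt_ratio_term_eq {x : ℝ} (hx : x ≠ 0) (k : ℕ) :
    ((-1) ^ (k + 1 + 1) * (Nat.factorial (2 * (k + 1) - 1) : ℝ) /
        (2 ^ (2 * (k + 1) - 1) * (Nat.factorial (k + 1 - 1)) * (Nat.factorial (k + 1)))) *
      x ^ (2 * (k + 1) - 1) =
      -x⁻¹ * (Ring.choose (-(1 / 2) : ℝ) (k + 1) * (x ^ 2) ^ (k + 1)) := by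
  rw [Ring.choose_neg_half_succ, show 2 * (k + 1) - 1 = 2 * k + 1 by omega, Nat.add_sub_cancel,
    ← pow_mul, show 2 * (k + 1) = 2 * k + 1 + 1 by ring]
  field_simp
  ring

/-- For `0 < |x| < 1`,
`(√(1+x²) − 1) / (x √(1+x²)) = Σ_{k≥1} ((-1)^{k+1} (2k−1)! / (2^{2k−1} (k−1)! k!)) x^{2k−1}`,
the series converging absolutely. -/
theorem sqrt_ratio_series (x : ℝ) (hx0 : 0 < |x|) (hx1 : |x| < 1) :
    Summable (fun k : ℕ =>
      |((-1) ^ (k + 1 + 1) * (Nat.factorial (2 * (k + 1) - 1) : ℝ) /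
          (2 ^ (2 * (k + 1) - 1) * (Nat.factorial (k + 1 - 1)) * (Nat.factorial (k + 1)))) *
        x ^ (2 * (k + 1) - 1)|) ∧
    (Real.sqrt (1 + x ^ 2) - 1) / (x * Real.sqrt (1 + x ^ 2)) =
      ∑' k : ℕ, ((-1) ^ (k + 1 + 1) * (Nat.factorial (2 * (k + 1) - 1) : ℝ) /
          (2 ^ (2 * (k + 1) - 1) * (Nat.factorial (k + 1 - 1)) * (Nat.factorial (k + 1)))) *
        x ^ (2 * (k + 1) - 1) := by
  have hx : x ≠ 0 := abs_pos.mp hx0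
  have hx2 : |x ^ 2| < 1 := by rw [abs_pow]; exact pow_lt_one₀ (abs_nonneg x) hx1 two_ne_zero
  simp_rw [sqrt_ratio_term_eq hx]
  constructor
  · simp_rw [abs_mul (-x⁻¹)]
    exact ((summable_nat_add_iff 1).2 (Real.summable_abs_choose_mul_pow _ hx2)).mul_left _
  · have hsum := ((hasSum_nat_add_iff' 1).2 (Real.hasSum_choose_mul_pow (-(1 / 2)) hx2)).mul_left
      (-x⁻¹)
    have hsqrt : (1 + x ^ 2) ^ (-(1 / 2) : ℝ) = (Real.sqrt (1 + x ^ 2))⁻¹ := by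
      rw [Real.rpow_neg (by positivity), Real.sqrt_eq_rpow]
    have hpos : 0 < Real.sqrt (1 + x ^ 2) := Real.sqrt_pos.2 (by positivity)
    rw [hsum.tsum_eq, hsqrt]
    simp only [Finset.range_one, Finset.sum_singleton, Ring.choose_zero_right, pow_zero, mul_one]
    field_simp
    ring
end

section
/- For every natural number n, the n+1 functions J_n, J_n', J_n'', …, J_n^{(n)} (the iterated derivatives of J_n of orders 0 through n) are linearly independent over ℝ as functions ℝ → ℝ; that is, they constitute a fundamental system of solutions of the associated degree-(n+1) differential equation. -/
/-!
`J_n` is entire, and its Taylor series at `0` starts with `x ^ n / (n! 2 ^ n)`, so `J_n` vanishes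
to order exactly `n` at `0`. For any smooth `f` vanishing to order exactly `n` at a point `x`, a
relation `∑ c_k f^{(k)} = 0` whose last nonzero coefficient is `c_j` becomes `c_j f^{(n)}(x) = 0`
after differentiating it `n - j` times and evaluating at `x`.
-/

/-- The Bessel function of the first kind of (natural) order `n`. -/
noncomputable def besselJ (n : ℕ) : ℝ → ℝ := fun x =>
  ∑' k : ℕ, (-1) ^ k / ((Nat.factorial k : ℝ) * (Nat.factorial (k + n))) * (x / 2) ^ (2 * k + n)

open Nat FormalMultilinearSeries
open scoped NNReal ContDiff

section IteratedDeriv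

variable {𝕜 F : Type*} [NontriviallyNormedField 𝕜] [NormedAddCommGroup F] [NormedSpace 𝕜 F]

theorem iteratedDeriv_iteratedDeriv (m k : ℕ) (f : 𝕜 → F) :
    iteratedDeriv m (iteratedDeriv k f) = iteratedDeriv (m + k) f := by
  simp only [iteratedDeriv_eq_iterate, Function.iterate_add_apply]

theorem iteratedDeriv_sum_smul_iteratedDeriv {ι : Type*} {f : 𝕜 → F} (hf : ContDiff 𝕜 ∞ f)
    (s : Finset ι) (c : ι → 𝕜) (d : ι → ℕ) (m : ℕ) (x : 𝕜) :
    iteratedDeriv m (∑ i ∈ s, c i • iteratedDeriv (d i) f) x =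
      ∑ i ∈ s, c i • iteratedDeriv (m + d i) f x := by
  have hd (i : ι) : ContDiff 𝕜 ∞ (iteratedDeriv (d i) f) :=
    iteratedDeriv_eq_iterate (f := f) ▸ hf.iterate_deriv (d i)
  rw [iteratedDeriv_sum (f := fun i => c i • iteratedDeriv (d i) f)
    fun i _ => ((contDiff_infty.mp (hd i) m).const_smul (c i)).contDiffAt]
  simp only [iteratedDeriv_const_smul_field, iteratedDeriv_iteratedDeriv]

theorem linearIndependent_iteratedDeriv_of_vanishing_order {f : 𝕜 → F} {x : 𝕜} {n : ℕ}
    (hf : ContDiff 𝕜 ∞ f) (hlt : ∀ m < n, iteratedDeriv m f x = 0)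
    (hn : iteratedDeriv n f x ≠ 0) :
    LinearIndependent 𝕜 (fun k : Fin (n + 1) => iteratedDeriv k f) := by
  classical
  rw [Fintype.linearIndependent_iff]
  intro c hc
  by_contra! hne
  obtain ⟨j, hj, hmax⟩ := ({i | c i ≠ 0} : Finset (Fin (n + 1))).exists_max_image id
    (by simpa [Finset.Nonempty] using hne)
  have h := congrArg (fun g => iteratedDeriv (n - j) g x) hc
  simp only [iteratedDeriv_sum_smul_iteratedDeriv hf, Pi.zero_def, iteratedDeriv_const,
    ite_self] at h
  rw [Finset.sum_eq_single j, Nat.sub_add_cancel j.is_le, smul_eq_zero] at h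
  · exact h.elim (by simpa using hj) hn
  · intro k _ hkj
    rcases lt_or_gt_of_ne hkj with hkj | hjk
    · rw [hlt _ (by omega), smul_zero]
    · have hck : c k = 0 := by
        by_contra hck
        exact (hmax k (by simpa using hck)).not_gt hjk
      rw [hck, zero_smul]
  · simp

end IteratedDeriv

theorem HasFPowerSeriesAt.iteratedDeriv_eq_factorial_mul {𝕜 : Type*} [NontriviallyNormedField 𝕜]
    [CompleteSpace 𝕜] {f : 𝕜 → 𝕜} {c : ℕ → 𝕜} {x : 𝕜}
    (hf : HasFPowerSeriesAt f (ofScalars 𝕜 c) x) (m : ℕ) :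
    iteratedDeriv m f x = m ! * c m := by
  obtain ⟨r, hr⟩ := hf
  have h := hr.factorial_smul 1 m
  rw [ofScalars_apply_eq, one_pow, smul_eq_mul, mul_one, nsmul_eq_mul] at h
  rw [h, iteratedDeriv_eq_iteratedFDeriv]

theorem two_mul_add_injective (n : ℕ) : Function.Injective fun k : ℕ => 2 * k + n :=
  fun a b h => by simp only at h; omega

noncomputable def besselCoeff (n : ℕ) : ℕ → ℝ :=
  Function.extend (fun k => 2 * k + n) (fun k => (-1) ^ k / (k ! * (k + n)! * 2 ^ (2 * k + n))) 0

theorem besselCoeff_two_mul_add (n k : ℕ) :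
    besselCoeff n (2 * k + n) = (-1) ^ k / (k ! * (k + n)! * 2 ^ (2 * k + n)) :=
  (two_mul_add_injective n).extend_apply _ _ k

theorem besselCoeff_eq_zero_of_notMem_range {n m : ℕ} (hm : m ∉ Set.range fun k => 2 * k + n) :
    besselCoeff n m = 0 :=
  Function.extend_apply' _ _ _ hm

theorem besselCoeff_self (n : ℕ) : besselCoeff n n = (n ! * 2 ^ n : ℝ)⁻¹ := by
  simpa using besselCoeff_two_mul_add n 0

theorem besselCoeff_of_lt {n m : ℕ} (hm : m < n) : besselCoeff n m = 0 :=
  besselCoeff_eq_zero_of_notMem_range fun ⟨k, hk⟩ => by dsimp only at hk; omega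

theorem summable_abs_besselCoeff_mul_pow (n : ℕ) (r : ℝ≥0) :
    Summable fun m => |besselCoeff n m| * (r : ℝ) ^ m := by
  refine (Function.Injective.summable_iff (two_mul_add_injective n) fun m hm => ?_).mp ?_
  · rw [besselCoeff_eq_zero_of_notMem_range hm, abs_zero, zero_mul]
  refine Summable.of_nonneg_of_le (fun k => mul_nonneg (abs_nonneg _) (by positivity))
    (fun k => ?_) ((Real.summable_pow_div_factorial ((r / 2 : ℝ) ^ 2)).mul_left ((r / 2 : ℝ) ^ n))
  simp only [Function.comp_apply, besselCoeff_two_mul_add, abs_div, abs_pow, abs_neg, abs_one,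
    one_pow, abs_of_pos (by positivity : (0 : ℝ) < k ! * (k + n)! * 2 ^ (2 * k + n))]
  calc 1 / (k ! * (k + n)! * 2 ^ (2 * k + n)) * (r : ℝ) ^ (2 * k + n)
      = (r / 2 : ℝ) ^ (2 * k + n) / (k ! * (k + n)!) := by rw [div_pow]; field_simp
    _ ≤ (r / 2 : ℝ) ^ (2 * k + n) / k ! := by
      gcongr
      exact le_mul_of_one_le_right (by positivity) (mod_cast (k + n).factorial_pos)
    _ = (r / 2 : ℝ) ^ n * (((r / 2 : ℝ) ^ 2) ^ k / k !) := by
      rw [← pow_mul, ← mul_div_assoc, ← pow_add, add_comm n]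

theorem radius_ofScalars_besselCoeff (n : ℕ) : (ofScalars ℝ (besselCoeff n)).radius = ⊤ :=
  radius_eq_top_of_summable_norm _ fun r => by
    simpa [ofScalars_norm] using summable_abs_besselCoeff_mul_pow n r

theorem besselJ_eq_ofScalarsSum (n : ℕ) : besselJ n = ofScalarsSum (besselCoeff n) := by
  funext x
  rw [ofScalars_sum_eq, besselJ,
    ← (two_mul_add_injective n).tsum_eq (f := fun m => besselCoeff n m • x ^ m)]
  · refine tsum_congr fun k => ?_
    rw [besselCoeff_two_mul_add, smul_eq_mul, div_pow]
    field_simp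
  · exact fun m hm => by_contra fun h => hm (by simp [besselCoeff_eq_zero_of_notMem_range h])

theorem hasFPowerSeriesOnBall_besselJ (n : ℕ) :
    HasFPowerSeriesOnBall (besselJ n) (ofScalars ℝ (besselCoeff n)) 0 ⊤ := by
  rw [besselJ_eq_ofScalarsSum, ← radius_ofScalars_besselCoeff n]
  exact (ofScalars ℝ (besselCoeff n)).hasFPowerSeriesOnBall (by simp [radius_ofScalars_besselCoeff])

theorem contDiff_besselJ (n : ℕ) : ContDiff ℝ ∞ (besselJ n) :=
  AnalyticOnNhd.contDiff <| by
    simpa [Metric.eball_top_eq_univ] using (hasFPowerSeriesOnBall_besselJ n).analyticOnNhd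

theorem iteratedDeriv_besselJ_zero (n m : ℕ) :
    iteratedDeriv m (besselJ n) 0 = m ! * besselCoeff n m :=
  (hasFPowerSeriesOnBall_besselJ n).hasFPowerSeriesAt.iteratedDeriv_eq_factorial_mul m

/-- The `n+1` functions `J_n, J_n', …, J_n^{(n)}` are linearly independent over `ℝ`
as functions `ℝ → ℝ`. -/
theorem besselJ_derivs_linearIndependent (n : ℕ) :
    LinearIndependent ℝ (fun k : Fin (n + 1) => iteratedDeriv (k : ℕ) (besselJ n)) :=
  linearIndependent_iteratedDeriv_of_vanishing_order (x := 0) (contDiff_besselJ n)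
    (fun m hm => by rw [iteratedDeriv_besselJ_zero, besselCoeff_of_lt hm, mul_zero])
    (by rw [iteratedDeriv_besselJ_zero, besselCoeff_self]; positivity)
end
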